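/- arXiv:1607.05718 — 7 statements merged into one kernel-verified Lean document; each statement's English description precedes it below -/
import Mathlib

section
/- For any prime p and positive integer h ≤ p-1, the maximum size of a subset A of Z/pZ such that the h-fold restricted sumset h^A (sums of h distinct elements of A) is not all of Z/pZ equals ⌊(p-2)/h⌋ + h. -/
/-!
For `k = ⌊(p - 2) / h⌋`, the lower bound is witnessed by the residues of `0, …, k + h - 1`:
their `h`-fold restricted sums lie in an integer interval of length `h * k + 1 < p`, so some
residue is missed.

The upper bound is the Dias da Silva–Hamidoune theorem `|h^A| ≥ min(p, h (|A| - h) + 1)`, whose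
right-hand side is `p` once `|A| ≥ k + h + 1`. It is proved by the polynomial method of
Alon–Nathanson–Ruzsa: if `C = h^A` were smaller, then `∏_{c ∈ C} (x₁ + ⋯ + x_h - c)` times the
Vandermonde polynomial `∏_{i < j} (x_j - x_i)` would vanish on `A^h`, while its coefficient at a
monomial `x^t` with distinct exponents `t_i < |A|` is, up to the unit `∏ t_i!`, equal to
`|C|! ∏_{i < j} (t_j - t_i) ≠ 0`; this contradicts the Combinatorial Nullstellensatz.
-/
open Finset MvPolynomial

section RestrictedSumset

variable {G H : Type*} [AddCommMonoid G] [DecidableEq G]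

def restrictedSumset (h : ℕ) (A : Finset G) : Finset G :=
  (A.powersetCard h).image fun B => ∑ x ∈ B, x

theorem mem_restrictedSumset {h : ℕ} {A : Finset G} {g : G} :
    g ∈ restrictedSumset h A ↔ ∃ B ⊆ A, #B = h ∧ ∑ x ∈ B, x = g := by
  simp [restrictedSumset, mem_powersetCard, and_assoc]

theorem restrictedSumset_image_subset [AddCommMonoid H] [DecidableEq H] (f : G →+ H)
    {A : Finset G} (hf : Set.InjOn f A) (h : ℕ) :
    restrictedSumset h (A.image f) ⊆ (restrictedSumset h A).image f := by
  intro y hy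
  obtain ⟨B, hBA, hBcard, rfl⟩ := mem_restrictedSumset.1 hy
  obtain ⟨B', hB'A, rfl⟩ := subset_image_iff.1 hBA
  have hinj : Set.InjOn f B' := hf.mono hB'A
  refine mem_image.2 ⟨∑ x ∈ B', x, mem_restrictedSumset.2 ⟨B', hB'A, ?_, rfl⟩, ?_⟩
  · rwa [card_image_of_injOn hinj] at hBcard
  · rw [map_sum, sum_image hinj]

end RestrictedSumset

theorem restrictedSumset_Ico_subset_Icc (h n : ℕ) :
    restrictedSumset h (Ico (0 : ℤ) n) ⊆
      Icc (∑ i ∈ range h, (i : ℤ)) (∑ i ∈ range h, ((n : ℤ) - 1 - i)) := by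
  intro x hx
  obtain ⟨B, hB, rfl, rfl⟩ := mem_restrictedSumset.1 hx
  have hlo := sum_range_le_sum (s := B) (c := 0) fun x hx => (mem_Ico.1 (hB hx)).1
  have hhi := sum_le_sum_range (s := B) (c := n - 1) fun x hx => by
    have := (mem_Ico.1 (hB hx)).2; omega
  simp only [zero_add] at hlo
  exact mem_Icc.2 ⟨hlo, hhi⟩

theorem card_restrictedSumset_Ico_le {h n : ℕ} (hhn : h ≤ n) :
    #(restrictedSumset h (Ico (0 : ℤ) n)) ≤ h * (n - h) + 1 := by
  have hwidth : ∑ i ∈ range h, ((n : ℤ) - 1 - i) - ∑ i ∈ range h, (i : ℤ)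
      = ((h * (n - h) : ℕ) : ℤ) := by
    rw [← sum_sub_distrib, Nat.cast_mul, Nat.cast_sub hhn]
    clear hhn
    induction h with
    | zero => simp
    | succ h ih => rw [sum_range_succ, ih]; push_cast; ring
  grw [card_le_card (restrictedSumset_Ico_subset_Icc h n), Int.card_Icc]
  omega

theorem ZMod.exists_card_eq_restrictedSumset_ne_univ {p h n : ℕ} [NeZero p] (hnp : n ≤ p)
    (hhn : h ≤ n) (hp : h * (n - h) + 1 < p) :
    ∃ A : Finset (ZMod p), #A = n ∧ restrictedSumset h A ≠ univ := by
  have hinj : Set.InjOn (Int.castAddHom (ZMod p)) (Ico (0 : ℤ) n) := by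
    intro a ha b hb hab
    simp only [coe_Ico, Set.mem_Ico] at ha hb
    have := (ZMod.intCast_eq_intCast_iff' a b p).1 hab
    rwa [Int.emod_eq_of_lt ha.1 (by omega), Int.emod_eq_of_lt hb.1 (by omega)] at this
  refine ⟨(Ico (0 : ℤ) n).image (Int.castAddHom (ZMod p)), ?_, ?_⟩
  · rw [card_image_of_injOn hinj]; simp
  · intro huniv
    have hcard := card_le_card (restrictedSumset_image_subset _ hinj h)
    grw [card_image_le, card_restrictedSumset_Ico_le hhn, huniv, card_univ, ZMod.card] at hcard
    omega

theorem Nat.sum_range_add_div {h : ℕ} (hh : 0 < h) (s : ℕ) :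
    ∑ i ∈ range h, (s + i) / h = s := by
  induction s with
  | zero => exact sum_eq_zero fun i hi => Nat.div_eq_of_lt (by simpa using hi)
  | succ s ih =>
    have shift := sum_range_succ' (fun i => (s + i) / h) h
    rw [sum_range_succ, ih, add_zero, Nat.add_div_right s hh] at shift
    simp only [← add_assoc] at shift
    simp_rw [add_right_comm s 1]
    omega

theorem exists_strictMono_sum_eq {h n s : ℕ} (hhn : h ≤ n) (hs : s ≤ h * (n - h)) :
    ∃ t : Fin h → ℕ, StrictMono t ∧ (∀ i, t i < n) ∧
      ∑ i, t i = s + ∑ i : Fin h, (i : ℕ) := by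
  obtain rfl | hh := h.eq_zero_or_pos
  · exact ⟨finZeroElim, fun i => i.elim0, fun i => i.elim0, by simp_all⟩
  have htop : (s + (h - 1)) / h ≤ n - h := by
    rw [Nat.div_le_iff_le_mul_add_pred hh]
    omega
  refine ⟨fun i => i + (s + i) / h, fun i j hij => ?_, fun i => ?_, ?_⟩
  · have : (s + i) / h ≤ (s + j) / h := Nat.div_le_div_right (by omega)
    dsimp only
    omega
  · have : (s + i) / h ≤ (s + (h - 1)) / h := Nat.div_le_div_right (by omega)
    have := i.isLt
    show i + (s + i) / h < n
    omega
  · rw [sum_add_distrib, Fin.sum_univ_eq_sum_range (fun i => (s + i) / h),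
      Nat.sum_range_add_div hh, add_comm]

theorem Nat.prod_factorial_mul_multinomial_sub {ι : Type*} [Fintype ι] {t e : ι → ℕ}
    (hle : ∀ i, e i ≤ t i) :
    (∏ i, (t i).factorial) * Nat.multinomial univ (fun i => t i - e i)
      = (∑ i, (t i - e i)).factorial * ∏ i, (t i).descFactorial (e i) := by
  simp_rw [← Nat.factorial_mul_descFactorial (hle _), prod_mul_distrib]
  rw [← Nat.multinomial_spec]
  ring

namespace MvPolynomial

theorem totalDegree_prod_sub_C_le {R σ : Type*} [CommRing R] {G : MvPolynomial σ R}
    (hG : G.totalDegree ≤ 1) (s : Finset R) : (∏ c ∈ s, (G - C c)).totalDegree ≤ #s := by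
  grw [totalDegree_finsetProd,
    sum_le_card_nsmul s _ 1 fun c _ => (totalDegree_sub_C_le G c).trans hG]
  simp

theorem coeff_prod_sub_C_mul {R σ : Type*} [CommRing R] {G : MvPolynomial σ R}
    (hG : G.totalDegree ≤ 1) (s : Finset R) (W : MvPolynomial σ R) {d : σ →₀ ℕ}
    (hd : #s + W.totalDegree ≤ d.degree) :
    coeff d ((∏ c ∈ s, (G - C c)) * W) = coeff d (G ^ #s * W) := by
  classical
  induction s using Finset.induction_on generalizing W with
  | empty => simp
  | insert a s ha ih =>
    rw [card_insert_of_notMem ha] at hd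
    have hGW : #s + (G * W).totalDegree ≤ d.degree :=
      le_trans (by grw [totalDegree_mul, hG]; omega) hd
    have hlow : coeff d ((∏ c ∈ s, (G - C c)) * W) = 0 := by
      apply coeff_eq_zero_of_totalDegree_lt
      rw [← Finsupp.degree_apply]
      grw [totalDegree_mul, totalDegree_prod_sub_C_le hG]
      omega
    rw [prod_insert ha, card_insert_of_notMem ha,
      show (G - C a) * (∏ c ∈ s, (G - C c)) * W
        = (∏ c ∈ s, (G - C c)) * (G * W) - C a * ((∏ c ∈ s, (G - C c)) * W) by ring,
      coeff_sub, coeff_C_mul, hlow, ih _ hGW, mul_zero, sub_zero, pow_succ, mul_assoc]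

variable {R : Type*} [CommRing R]

variable (R) in
noncomputable def vandermonde (n : ℕ) : MvPolynomial (Fin n) R :=
  ∏ i, ∏ j ∈ Ioi i, (X j - X i)

variable {n : ℕ}

theorem vandermonde_eq_sum_perm :
    vandermonde R n =
      ∑ σ : Equiv.Perm (Fin n), Equiv.Perm.sign σ • ∏ i, X (σ i) ^ (i : ℕ) := by
  rw [vandermonde, ← Matrix.det_vandermonde, Matrix.det_apply]
  rfl

theorem eval_vandermonde (s : Fin n → R) :
    eval s (vandermonde R n) = (Matrix.vandermonde s).det := by
  simp [vandermonde, Matrix.det_vandermonde]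

theorem eval_vandermonde_eq_zero {s : Fin n → R} (hs : ¬ Function.Injective s) :
    eval s (vandermonde R n) = 0 := by
  obtain ⟨i, j, hij, hne⟩ := Function.not_injective_iff.1 hs
  rw [eval_vandermonde]
  exact Matrix.det_zero_of_row_eq hne (by ext k; simp [Matrix.vandermonde_apply, hij])

theorem isHomogeneous_vandermonde :
    (vandermonde R n).IsHomogeneous (∑ i : Fin n, (i : ℕ)) := by
  rw [vandermonde_eq_sum_perm]
  refine IsHomogeneous.sum _ _ _ fun σ _ => ?_
  have hprod := IsHomogeneous.prod univ _ _ fun i _ => isHomogeneous_X_pow (R := R) (σ i) (i : ℕ)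
  rw [← mem_homogeneousSubmodule] at hprod ⊢
  exact Submodule.smul_of_tower_mem _ _ hprod

theorem factorial_mul_coeff_sum_X_pow_mul_prod_X_pow {R ι : Type*} [CommSemiring R] [Fintype ι]
    (t e : ι → ℕ) {N : ℕ} (hsum : ∑ i, t i = N + ∑ i, e i) :
    (∏ i, ((t i).factorial : R)) *
        coeff (Finsupp.equivFunOnFinite.symm t) ((∑ i, X i) ^ N * ∏ i, X i ^ e i)
      = N.factorial * ∏ i, ((t i).descFactorial (e i) : R) := by
  have hmono :
      ∏ i, (X i : MvPolynomial ι R) ^ e i = monomial (Finsupp.equivFunOnFinite.symm e) 1 := by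
    rw [monomial_eq, C_1, one_mul, Finsupp.prod_fintype _ _ (fun _ => pow_zero _)]
    simp
  rw [hmono, coeff_mul_monomial']
  split_ifs with hle
  · replace hle : ∀ i, e i ≤ t i := fun i => by simpa using hle i
    have hN : ∑ i, (t i - e i) = N := by
      rw [sum_tsub_distrib _ fun i _ => hle i]; omega
    have hsub : ⇑(Finsupp.equivFunOnFinite.symm t - Finsupp.equivFunOnFinite.symm e)
        = fun i => t i - e i := by
      ext; simp
    rw [mul_one, coeff_sum_X_pow_of_fintype, Finsupp.sum_fintype _ _ (fun _ => rfl), hsub,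
      if_pos hN, Finsupp.multinomial_eq_of_support_subset (subset_univ _), hsub]
    have key := Nat.prod_factorial_mul_multinomial_sub hle
    rw [hN] at key
    exact_mod_cast congrArg (Nat.cast : ℕ → R) key
  · obtain ⟨i, hi⟩ : ∃ i, t i < e i := by
      by_contra! h
      exact hle fun i => by simpa using h i
    rw [mul_zero, prod_eq_zero (mem_univ i) (by rw [Nat.descFactorial_eq_zero_iff_lt.2 hi]; simp),
      mul_zero]

theorem factorial_mul_coeff_sum_X_pow_mul_vandermonde [IsDomain R] (t : Fin n → ℕ) {N : ℕ}
    (hsum : ∑ i, t i = N + ∑ i : Fin n, (i : ℕ)) :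
    (∏ i, ((t i).factorial : R)) *
        coeff (Finsupp.equivFunOnFinite.symm t) ((∑ i, X i) ^ N * vandermonde R n)
      = N.factorial * ∏ i, ∏ j ∈ Ioi i, ((t j : R) - t i) := by
  rw [← Matrix.det_vandermonde, Matrix.det_eval_matrixOfPolynomials_eq_det_vandermonde _
      (fun j => descPochhammer R j) (fun j => descPochhammer_natDegree R j)
      (fun j => monic_descPochhammer R j),
    Matrix.det_apply, vandermonde_eq_sum_perm, mul_sum, coeff_sum, mul_sum, mul_sum]
  refine sum_congr rfl fun σ _ => ?_
  have hperm :
      ∏ i, (X (σ i) : MvPolynomial (Fin n) R) ^ (i : ℕ) = ∏ j, X j ^ (σ.symm j : ℕ) := by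
    simp [← Equiv.prod_comp σ (fun j => (X j : MvPolynomial (Fin n) R) ^ (σ.symm j : ℕ))]
  have hsumσ : ∑ i, t i = N + ∑ j, (σ.symm j : ℕ) := by
    rw [hsum, Equiv.sum_comp σ.symm (fun i => (i : ℕ))]
  rw [mul_smul_comm, coeff_smul, mul_smul_comm, mul_smul_comm, hperm,
    factorial_mul_coeff_sum_X_pow_mul_prod_X_pow t _ hsumσ, ← Equiv.prod_comp σ]
  simp [descPochhammer_eval_eq_descFactorial]

end MvPolynomial

namespace ZMod

variable {p : ℕ} [Fact p.Prime]

theorem natCast_injOn_Iio : Set.InjOn (Nat.cast : ℕ → ZMod p) (Set.Iio p) :=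
  fun a ha b hb hab => by
  rw [← val_cast_of_lt (Set.mem_Iio.1 ha), ← val_cast_of_lt (Set.mem_Iio.1 hb), hab]

theorem coeff_sum_X_pow_mul_vandermonde_ne_zero {n N : ℕ} {t : Fin n → ℕ} (ht : StrictMono t)
    (htp : ∀ i, t i < p) (hN : N < p) (hsum : ∑ i, t i = N + ∑ i : Fin n, (i : ℕ)) :
    coeff (Finsupp.equivFunOnFinite.symm t) ((∑ i, X i) ^ N * vandermonde (ZMod p) n) ≠ 0 := by
  intro hzero
  have hformula := factorial_mul_coeff_sum_X_pow_mul_vandermonde (R := ZMod p) t hsum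
  rw [hzero, mul_zero, eq_comm] at hformula
  refine mul_ne_zero ?_ (prod_ne_zero_iff.2 fun i _ => prod_ne_zero_iff.2 fun j hj => ?_) hformula
  · rw [Ne, natCast_eq_zero_iff, (Fact.out : p.Prime).dvd_factorial]
    omega
  · refine sub_ne_zero.2 fun heq => (ht (mem_Ioi.1 hj)).ne' ?_
    exact natCast_injOn_Iio (htp j) (htp i) heq

theorem min_le_card_restrictedSumset (A : Finset (ZMod p)) {h : ℕ} (hA : h ≤ #A) :
    min p (h * (#A - h) + 1) ≤ #(restrictedSumset h A) := by
  by_contra! hlt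
  set m := #(restrictedSumset h A)
  have hm := lt_min_iff.1 hlt
  obtain ⟨t, ht_mono, ht_lt, ht_sum⟩ := exists_strictMono_sum_eq (s := m) hA (by omega)
  set T := Finsupp.equivFunOnFinite.symm t
  set G : MvPolynomial (Fin h) (ZMod p) := ∑ i, X i
  set f := (∏ c ∈ restrictedSumset h A, (G - C c)) * vandermonde (ZMod p) h
  have hG : G.totalDegree ≤ 1 :=
    (totalDegree_finsetSum _ _).trans (Finset.sup_le fun i _ => (totalDegree_X i).le)
  have hTdeg : T.degree = m + ∑ i : Fin h, (i : ℕ) := by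
    rw [Finsupp.degree_eq_sum]; simpa [T] using ht_sum
  have hVdeg := (isHomogeneous_vandermonde (R := ZMod p) (n := h)).totalDegree_le
  have hcoeff : coeff T f ≠ 0 := by
    rw [coeff_prod_sub_C_mul hG _ _ (by omega)]
    refine coeff_sum_X_pow_mul_vandermonde_ne_zero ht_mono (fun i => ?_) hm.1 ht_sum
    exact (ht_lt i).trans_le (A.card_le_univ.trans_eq (ZMod.card p))
  have hfdeg : f.totalDegree = T.degree := by
    refine le_antisymm ?_ ?_
    · grw [totalDegree_mul, totalDegree_prod_sub_C_le hG, hVdeg, hTdeg]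
    · exact le_totalDegree (mem_support_iff.2 hcoeff)
  obtain ⟨s, hsA, hs⟩ := combinatorial_nullstellensatz_exists_eval_nonzero f T hcoeff hfdeg
    (fun _ => A) (fun i => by simpa [T] using ht_lt i)
  refine hs ?_
  by_cases hinj : Function.Injective s
  · have hmem : ∑ i, s i ∈ restrictedSumset h A := by
      refine mem_restrictedSumset.2 ⟨univ.image s, image_subset_iff.2 fun i _ => hsA i, ?_, ?_⟩
      · rw [card_image_of_injective _ hinj, card_univ, Fintype.card_fin]
      · exact sum_image fun i _ j _ hij => hinj hij
    rw [map_mul, map_prod, prod_eq_zero hmem (by simp [G]), zero_mul]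
  · rw [map_mul, eval_vandermonde_eq_zero hinj, mul_zero]

end ZMod

theorem stmt0 (p h : ℕ) (hp : p.Prime) (h1 : 1 ≤ h) (h2 : h ≤ p - 1) :
    IsGreatest {m : ℕ | ∃ A : Finset (ZMod p), A.card = m ∧
      ∃ g : ZMod p, ¬ ∃ B ⊆ A, B.card = h ∧ B.sum id = g} ((p - 2) / h + h) := by
  have := Fact.mk hp
  have hk : h * ((p - 2) / h) ≤ p - 2 := Nat.mul_div_le _ _
  have hk' : p - 2 < h * ((p - 2) / h + 1) := Nat.lt_mul_div_succ _ h1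
  have hkp : (p - 2) / h < p - h + 1 := by
    rw [Nat.div_lt_iff_lt_mul (by omega)]
    calc p - 2 < (p - h) + h := by omega
      _ ≤ (p - h) * h + h := by grw [← Nat.le_mul_of_pos_right _ h1]
      _ = (p - h + 1) * h := by ring
  generalize (p - 2) / h = k at *
  refine ⟨?_, ?_⟩
  · obtain ⟨A, hA, hne⟩ := ZMod.exists_card_eq_restrictedSumset_ne_univ (p := p) (h := h)
      (n := k + h) (by omega) (by omega) (by rw [Nat.add_sub_cancel]; omega)
    obtain ⟨g, hg⟩ := not_forall.1 (mt eq_univ_iff_forall.2 hne)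
    exact ⟨A, hA, g, fun hB => hg (mem_restrictedSumset.2 hB)⟩
  · rintro _ ⟨A, rfl, g, hg⟩
    by_contra! hA
    have hbig : h * (k + 1) ≤ h * (#A - h) := Nat.mul_le_mul_left _ (by omega)
    have hmin := ZMod.min_le_card_restrictedSumset A (h := h) (by omega)
    have huniv : restrictedSumset h A = univ := by
      refine eq_univ_of_card _ (le_antisymm (card_le_univ _) ?_)
      rw [ZMod.card]; omega
    exact hg (mem_restrictedSumset.1 (huniv ▸ mem_univ g))
end

section
/- If A is a weakly 4-zero-sum-free subset of an elementary abelian 2-group G of order n, then |A|(|A|-1)/2 ≤ n. -/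
theorem stmt3 (G : Type*) [AddCommGroup G] [Fintype G] (h2 : ∀ g : G, g + g = 0)
    (A : Finset G) (hA : ¬ ∃ B ⊆ A, B.card = 4 ∧ B.sum id = (0 : G)) :
    A.card * (A.card - 1) / 2 ≤ Fintype.card G := by
  classical
  have key : Set.InjOn (fun s : Finset G => s.sum id) (A.powersetCard 2) := by
    intro s hs t ht hst
    simp only [Finset.mem_coe, Finset.mem_powersetCard] at hs ht
    by_contra hne
    by_cases hd : Disjoint s t
    · apply hA
      refine ⟨s ∪ t, Finset.union_subset hs.1 ht.1, ?_, ?_⟩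
      · rw [Finset.card_union_of_disjoint hd, hs.2, ht.2]
      · rw [Finset.sum_union hd]
        simp only at hst
        rw [hst]
        exact h2 _
    · obtain ⟨x, hxs, hxt⟩ := Finset.not_disjoint_iff.1 hd
      obtain ⟨y, hy⟩ := Finset.card_eq_one.1
        (by rw [Finset.card_erase_of_mem hxs, hs.2])
      obtain ⟨z, hz⟩ := Finset.card_eq_one.1
        (by rw [Finset.card_erase_of_mem hxt, ht.2])
      have hxy : x ≠ y := by
        intro h; have := Finset.mem_erase.1 (hy ▸ Finset.mem_singleton_self y)
        exact this.1 h.symm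
      have hxz : x ≠ z := by
        intro h; have := Finset.mem_erase.1 (hz ▸ Finset.mem_singleton_self z)
        exact this.1 h.symm
      have hsx : s = {x, y} := by
        rw [← Finset.insert_erase hxs, hy]
      have htx : t = {x, z} := by
        rw [← Finset.insert_erase hxt, hz]
      have hsum : x + y = x + z := by
        have h1 : s.sum id = x + y := by simp [hsx, Finset.sum_pair hxy]
        have h2' : t.sum id = x + z := by simp [htx, Finset.sum_pair hxz]
        simp only at hst
        rw [h1, h2'] at hst; exact hst
      have : y = z := add_left_cancel hsum
      exact hne (by rw [hsx, htx, this])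
  have h1 : (A.powersetCard 2).card ≤ Fintype.card G := by
    have := Finset.card_le_card_of_injOn (fun s : Finset G => s.sum id)
      (fun s _ => Finset.mem_univ _) key
    simpa using this
  rw [Finset.card_powersetCard, Nat.choose_two_right] at h1
  exact h1
end

section
/- Let G be a finite abelian group of order n whose subgroup of involutions (elements g with 2g = 0) has order l. Then the maximum size of a subset A of G such that the 2-fold restricted sumset 2^A ≠ G equals (n+l)/2. -/
open Finset

theorem stmt6 (G : Type*) [AddCommGroup G] [Fintype G] :
    IsGreatest {m : ℕ | ∃ A : Finset G, A.card = m ∧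
      ∃ g : G, ¬ ∃ B ⊆ A, B.card = 2 ∧ B.sum id = g}
      ((Fintype.card G + Nat.card {g : G // g + g = 0}) / 2) := by
  classical
  set n := Fintype.card G with hn
  have hl : Nat.card {g : G // g + g = 0} = (univ.filter (fun x : G => x + x = 0)).card := by
    rw [Nat.card_eq_fintype_card, Fintype.card_subtype]
  set S : Finset G := univ.filter (fun x : G => x + x = 0) with hSdef
  rw [hl]
  -- translation between formulations
  have key : ∀ (A : Finset G) (g : G),
      (¬ ∃ B ⊆ A, B.card = 2 ∧ B.sum id = g) ↔
        (∀ a ∈ A, ∀ b ∈ A, a ≠ b → a + b ≠ g) := by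
    intro A g
    constructor
    · intro h a ha b hb hab habg
      refine h ⟨{a, b}, ?_, ?_, ?_⟩
      · simp [Finset.insert_subset_iff, ha, hb]
      · rw [card_insert_of_notMem (by simp [hab]), card_singleton]
      · simpa [Finset.sum_pair hab] using habg
    · rintro h ⟨B, hBA, hB2, hBs⟩
      obtain ⟨a, b, hab, rfl⟩ := Finset.card_eq_two.mp hB2
      have ha : a ∈ A := hBA (by simp)
      have hb : b ∈ A := hBA (by simp)
      exact h a ha b hb hab (by simpa [Finset.sum_pair hab] using hBs)
  constructor
  · -- membership: construct a maximum-size sum-free-for-0 set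
    set P : Finset G → Prop := fun A => ∀ a ∈ A, ∀ b ∈ A, a ≠ b → a + b ≠ 0 with hP
    set 𝒜 : Finset (Finset G) := univ.filter P with h𝒜
    have hne : 𝒜.Nonempty := ⟨∅, by simp [h𝒜, hP]⟩
    obtain ⟨A, hA𝒜, hAmax⟩ := Finset.exists_max_image 𝒜 Finset.card hne
    have hPA : P A := (mem_filter.mp hA𝒜).2
    -- maximality consequences
    have hmax : ∀ x ∉ A, -x ∈ A := by
      intro x hx
      by_contra hnx
      have hPins : ¬ P (insert x A) := by
        intro hp
        have := hAmax (insert x A) (mem_filter.mpr ⟨mem_univ _, hp⟩)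
        rw [card_insert_of_notMem hx] at this
        omega
      simp only [hP] at hPins
      push_neg at hPins
      obtain ⟨a, ha, b, hb, hab, habs⟩ := hPins
      rcases mem_insert.mp ha with rfl | haA
      · rcases mem_insert.mp hb with rfl | hbA
        · exact hab rfl
        · exact hnx (by rwa [show -a = b from neg_eq_of_add_eq_zero_right habs])
      · rcases mem_insert.mp hb with rfl | hbA
        · exact hnx (by rwa [show -b = a from neg_eq_of_add_eq_zero_left habs])
        · exact hPA a haA b hbA hab habs
    have hScA : S ⊆ A := by
      intro x hxS
      by_contra hx
      have h1 := hmax x hx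
      have h2 : x + x = 0 := (mem_filter.mp hxS).2
      have : -x = x := neg_eq_of_add_eq_zero_right h2
      rw [this] at h1; exact hx h1
    have hnegA : ∀ a ∈ A, a + a ≠ 0 → -a ∉ A := by
      intro a ha h2 hna
      have hne' : a ≠ -a := by
        intro h
        apply h2
        rw [show a + a = a - (-a) from by abel, ← h, sub_self]
      exact hPA a ha (-a) hna (fun h => hne' h) (by abel)
    -- bijection between complement and A \ S
    have hcard : (univ \ A).card = (A \ S).card := by
      apply Finset.card_bij (fun x _ => -x)
      · intro x hx
        simp only [mem_sdiff, mem_univ, true_and] at hx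
        have h1 := hmax x hx
        rw [mem_sdiff]
        refine ⟨h1, ?_⟩
        intro hs
        have h2 : -x + -x = 0 := (mem_filter.mp hs).2
        have hxx : x + x = 0 := by
          rw [show x + x = -(-x + -x) from by abel, h2, neg_zero]
        have : -x = x := neg_eq_of_add_eq_zero_right hxx
        rw [this] at h1; exact hx h1
      · intro a _ b _ h
        exact neg_injective h
      · intro a ha
        rw [mem_sdiff] at ha
        obtain ⟨haA, haS⟩ := ha
        have h2 : a + a ≠ 0 := by
          intro h; exact haS (mem_filter.mpr ⟨mem_univ _, h⟩)
        refine ⟨-a, ?_, by simp⟩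
        simp only [mem_sdiff, mem_univ, true_and]
        exact hnegA a haA h2
    have hc1 : (univ \ A).card = n - A.card := by
      rw [card_sdiff_of_subset (subset_univ A), card_univ, hn]
    have hc2 : (A \ S).card = A.card - S.card := card_sdiff_of_subset hScA
    have hSA : S.card ≤ A.card := card_le_card hScA
    have hAn : A.card ≤ n := by rw [hn, ← card_univ]; exact card_le_card (subset_univ A)
    have hAcard : A.card = (n + S.card) / 2 := by omega
    exact ⟨A, hAcard, 0, (key A 0).mpr hPA⟩
  · -- upper bound
    rintro m ⟨A, rfl, g, hg⟩
    rw [key] at hg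
    set φ : G → G := fun x => g - x with hφ
    have himg : (A.image φ).card = A.card :=
      card_image_of_injective _ sub_right_injective
    set F : Finset G := univ.filter (fun x : G => x + x = g) with hF
    have hinter : A ∩ A.image φ ⊆ F := by
      intro x hx
      rw [mem_inter, mem_image] at hx
      obtain ⟨hxA, b, hbA, hbx⟩ := hx
      by_cases hxb : x = b
      · subst hxb
        exact mem_filter.mpr ⟨mem_univ _, (sub_eq_iff_eq_add.mp hbx).symm⟩
      · exact absurd (by rw [← hbx]; show g - b + b = g; abel) (hg x hxA b hbA hxb)
    have hFS : F.card ≤ S.card := by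
      rcases F.eq_empty_or_nonempty with h | ⟨x0, hx0⟩
      · simp [h]
      · have hx0g : x0 + x0 = g := (mem_filter.mp hx0).2
        apply Finset.card_le_card_of_injOn (fun y => y - x0)
        · intro y hy
          have hyg : y + y = g := (mem_filter.mp hy).2
          refine mem_filter.mpr ⟨mem_univ _, ?_⟩
          rw [show y - x0 + (y - x0) = (y + y) - (x0 + x0) from by abel, hyg, hx0g, sub_self]
        · intro a _ b _ h
          exact sub_left_injective h
    have hun : (A ∪ A.image φ).card ≤ n := by
      rw [hn, ← card_univ]; exact card_le_card (subset_univ _)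
    have hsum : (A ∪ A.image φ).card + (A ∩ A.image φ).card = A.card + (A.image φ).card :=
      card_union_add_card_inter _ _
    have hintc : (A ∩ A.image φ).card ≤ S.card :=
      le_trans (card_le_card hinter) hFS
    have h2 : 2 * A.card ≤ n + S.card := by omega
    omega
end

section
/- If G is the elementary abelian 2-group of order n = 2^r with r ≥ 1, then the maximum size of a subset A of G whose 3-fold restricted sumset 3^A is not all of G equals n/2 + 1. -/
theorem stmt8 (G : Type*) [AddCommGroup G] [Fintype G] (r : ℕ) (hr : 1 ≤ r)
    (h2 : ∀ g : G, g + g = 0) (hn : Fintype.card G = 2 ^ r) :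
    IsGreatest {m : ℕ | ∃ A : Finset G, A.card = m ∧
      ∃ g : G, ¬ ∃ B ⊆ A, B.card = 3 ∧ B.sum id = g}
      (Fintype.card G / 2 + 1) := by
  classical
  have hn2 : 2 ≤ Fintype.card G := by
    rw [hn]; calc 2 = 2 ^ 1 := rfl
    _ ≤ 2 ^ r := Nat.pow_le_pow_right (by norm_num) hr
  have heven : 2 * (Fintype.card G / 2) = Fintype.card G := by
    rw [hn]
    rcases Nat.exists_eq_add_of_le hr with ⟨k, hk⟩
    subst hk
    rw [pow_add, pow_one]
    omega
  have hnontriv : Nontrivial G := Fintype.one_lt_card_iff_nontrivial.mp (by omega)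
  letI : Module (ZMod 2) G := AddCommGroup.zmodModule (by
    intro x; rw [two_nsmul]; exact h2 x)
  constructor
  · -- membership: the construction
    set b := Module.Basis.ofVectorSpace (ZMod 2) G with hb
    obtain ⟨i⟩ := b.index_nonempty
    set φ : G →ₗ[ZMod 2] ZMod 2 := b.coord i with hφ
    have hφbi : φ (b i) = 1 := by simp [hφ]
    set F1 : Finset G := Finset.univ.filter (fun g => φ g = 1) with hF1
    set F0 : Finset G := Finset.univ.filter (fun g => φ g = 0) with hF0
    have hzmod : ∀ a : ZMod 2, a = 0 ∨ a = 1 := by decide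
    have hcards : F0.card = F1.card := by
      apply Finset.card_bij (fun g _ => g + b i)
      · intro g hg
        simp only [hF1, Finset.mem_filter, Finset.mem_univ, true_and, map_add, hφbi]
        simp only [hF0, Finset.mem_filter, Finset.mem_univ, true_and] at hg
        rw [hg, zero_add]
      · intro g₁ h₁ g₂ h₂ h
        have := congrArg (· + b i) h
        simpa [add_assoc, h2] using this
      · intro g hg
        refine ⟨g + b i, ?_, ?_⟩
        · simp only [hF0, Finset.mem_filter, Finset.mem_univ, true_and, map_add, hφbi]
          simp only [hF1, Finset.mem_filter, Finset.mem_univ, true_and] at hg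
          rw [hg]; decide
        · rw [add_assoc, h2, add_zero]
      
    have hsum : F0.card + F1.card = Fintype.card G := by
      rw [← Finset.card_union_of_disjoint, ← Finset.card_univ]
      · congr 1
        ext g
        simp only [hF0, hF1, Finset.mem_union, Finset.mem_filter, Finset.mem_univ, true_and,
          iff_true]
        exact hzmod (φ g)
      · rw [Finset.disjoint_left]
        intro x hx0 hx1
        simp only [hF0, hF1, Finset.mem_filter] at hx0 hx1
        rw [hx0.2] at hx1
        exact absurd hx1.2 (by decide)
    have hF1card : F1.card = Fintype.card G / 2 := by omega
    have h0 : (0 : G) ∉ F1 := by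
      simp [hF1]
    refine ⟨insert 0 F1, ?_, 0, ?_⟩
    · rw [Finset.card_insert_of_notMem h0, hF1card]
    · rintro ⟨B, hBA, hB3, hBsum⟩
      by_cases h0B : (0 : G) ∈ B
      · -- B = {0, x, y}, x + y = 0 forces x = y
        have hcard2 : (B.erase 0).card = 2 := by
          rw [Finset.card_erase_of_mem h0B, hB3]
        obtain ⟨x, y, hxy, hxyeq⟩ := Finset.card_eq_two.mp hcard2
        have hsumB : B.sum id = x + y := by
          rw [← Finset.insert_erase h0B, Finset.sum_insert (Finset.notMem_erase _ _),
            hxyeq]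
          simp [Finset.sum_pair hxy]
        rw [hBsum] at hsumB
        apply hxy
        have := h2 y
        calc x = x + (y + y) := by rw [h2, add_zero]
        _ = (x + y) + y := by rw [add_assoc]
        _ = y := by rw [← hsumB, zero_add]
      · -- all elements have φ = 1, so φ (sum) = 3 = 1 ≠ 0
        have hall : ∀ x ∈ B, φ x = 1 := by
          intro x hx
          have := hBA hx
          rcases Finset.mem_insert.mp this with h | h
          · exact absurd (h ▸ hx) h0B
          · simpa [hF1] using h
        have : φ (B.sum id) = 1 := by
          rw [map_sum]
          have hc : ∑ x ∈ B, φ (id x) = ∑ _x ∈ B, (1 : ZMod 2) :=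
            Finset.sum_congr rfl (fun x hx => hall x hx)
          rw [hc, Finset.sum_const, hB3]
          decide
        rw [hBsum] at this
        simp at this
  · -- upper bound
    rintro m ⟨A, hAcard, g, hg⟩
    by_contra hlt
    push_neg at hlt
    have hA : Fintype.card G / 2 + 2 ≤ A.card := by omega
    exfalso
    apply hg
    -- pick a ∈ A with a ≠ g
    obtain ⟨a, haA, hag⟩ := Finset.exists_mem_ne (s := A) (by omega) g
    set f : G → G := fun x => g + a + x with hf
    have hfinj : Function.Injective f := fun x y h => by
      simpa [hf] using h
    have himgcard : (A.image f).card = A.card := Finset.card_image_of_injective _ hfinj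
    have hunion : (A ∪ A.image f).card ≤ Fintype.card G := by
      rw [← Finset.card_univ]
      exact Finset.card_le_card (Finset.subset_univ _)
    have hinter : 4 ≤ (A ∩ A.image f).card := by
      have := Finset.card_union_add_card_inter A (A.image f)
      omega
    have hT : 2 ≤ ((A ∩ A.image f) \ {a, g}).card := by
      have h1 : ((A ∩ A.image f) \ {a, g}).card ≥ (A ∩ A.image f).card - ({a, g} : Finset G).card :=
        Finset.le_card_sdiff _ _
      have h2' : ({a, g} : Finset G).card ≤ 2 := Finset.card_insert_le _ _ |>.trans (by simp)
      omega
    obtain ⟨x, hx⟩ := Finset.card_pos.mp (by omega : 0 < ((A ∩ A.image f) \ {a, g}).card)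
    rw [Finset.mem_sdiff, Finset.mem_inter] at hx
    obtain ⟨⟨hxA, hximg⟩, hxne⟩ := hx
    have hxa : x ≠ a := fun h => hxne (by simp [h])
    have hxg : x ≠ g := fun h => hxne (by simp [h])
    set c : G := g + a + x with hc
    have hcA : c ∈ A := by
      obtain ⟨x', hx'A, hx'eq⟩ := Finset.mem_image.mp hximg
      have : c = x' := by
        rw [hc, ← hx'eq]
        show g + a + (g + a + x') = x'
        calc g + a + (g + a + x') = (g + g) + (a + a) + x' := by abel
        _ = x' := by rw [h2, h2, zero_add, zero_add]
      rw [this]; exact hx'A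
    have hca : c ≠ a := by
      intro h
      apply hxg
      have : g + a + x = a := h
      calc x = (a + a) + (g + g) + x := by rw [h2, h2]; abel
      _ = a + (g + a + x) + g := by abel
      _ = a + a + g := by rw [this]
      _ = g := by rw [h2, zero_add]
    have hcx : c ≠ x := by
      intro h
      apply hag
      have : g + a + x = x := h
      calc a = a + (g + g) + (x + x) := by rw [h2, h2]; abel
      _ = g + (g + a + x) + x := by abel
      _ = g + x + x := by rw [this]
      _ = g := by rw [add_assoc, h2, add_zero]
    refine ⟨{a, x, c}, ?_, ?_, ?_⟩
    · intro y hy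
      rcases Finset.mem_insert.mp hy with h | h
      · exact h ▸ haA
      rcases Finset.mem_insert.mp h with h | h
      · exact h ▸ hxA
      · rw [Finset.mem_singleton.mp h]; exact hcA
    · rw [Finset.card_insert_of_notMem, Finset.card_insert_of_notMem, Finset.card_singleton]
      · simp [hcx.symm]
      · simp [hxa, hca.symm, Ne.symm]
    · rw [Finset.sum_insert, Finset.sum_insert, Finset.sum_singleton]
      · show a + (x + (g + a + x)) = g
        calc a + (x + (g + a + x)) = g + (a + a) + (x + x) := by abel
        _ = g := by rw [h2, h2, add_zero, add_zero]
      · simp [hcx.symm]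
      · simp [hxa, hca.symm, Ne.symm]
end

section
/- Let G be the elementary abelian 2-group of order n = 2^r. For each integer h with 4 ≤ h ≤ n/2 - 2, every subset A of G of size at least n/2 + h - 1 satisfies h^A = G; consequently C_h(G) ≤ n/2 + h - 2. -/
/-!
Pick `h - 2` elements of `A` whose sum `s` differs from `g` (swapping one element fixes a bad
choice). The remaining part of `A` has more than `|G| / 2` elements, so by pigeonhole it contains
`x, y` with `x + y = g - s`; as `g - s ≠ 0` and `x + x = 0`, these are distinct.
-/

open Finset

theorem Finset.exists_subset_card_eq_sum_ne {G : Type*} [AddCancelCommMonoid G] (A : Finset G)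
    {k : ℕ} (hk : 0 < k) (hkA : k < #A) (g : G) :
    ∃ S ⊆ A, #S = k ∧ ∑ x ∈ S, x ≠ g := by
  classical
  obtain ⟨S, hSA, hS⟩ := exists_subset_card_eq hkA.le
  by_cases hSg : ∑ x ∈ S, x = g
  swap
  · exact ⟨S, hSA, hS, hSg⟩
  obtain ⟨a, ha⟩ : S.Nonempty := card_pos.mp (hS ▸ hk)
  obtain ⟨b, hb⟩ : (A \ S).Nonempty := card_pos.mp (by rw [card_sdiff_of_subset hSA]; omega)
  obtain ⟨hbA, hbS⟩ := mem_sdiff.mp hb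
  have hbS' : b ∉ S.erase a := fun h ↦ hbS (mem_of_mem_erase h)
  refine ⟨insert b (S.erase a), insert_subset hbA ((erase_subset a S).trans hSA), ?_, ?_⟩
  · rw [card_insert_of_notMem hbS', card_erase_of_mem ha, hS]
    omega
  · intro hg
    rw [sum_insert hbS', ← hSg, ← add_sum_erase S _ ha] at hg
    exact hbS (by rwa [add_right_cancel hg])

theorem Finset.exists_mem_mem_add_eq_of_card_lt {G : Type*} [AddCommGroup G] [Fintype G]
    {A B : Finset G} (hAB : Fintype.card G < #A + #B) (t : G) :
    ∃ a ∈ A, ∃ b ∈ B, a + b = t := by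
  classical
  have hcard : #(B.image (t - ·)) = #B := card_image_of_injective _ sub_right_injective
  obtain ⟨a, ha⟩ := inter_nonempty_of_card_lt_card_add_card (subset_univ A)
    (subset_univ (B.image (t - ·))) (by rwa [card_univ, hcard])
  obtain ⟨haA, haB⟩ := mem_inter.mp ha
  obtain ⟨b, hb, rfl⟩ := mem_image.mp haB
  exact ⟨t - b, haA, b, hb, sub_add_cancel t b⟩

theorem Finset.exists_ne_add_eq_of_card_lt_two_mul {G : Type*} [AddCommGroup G] [Fintype G]
    (h2G : ∀ g : G, g + g = 0) {A : Finset G} (hA : Fintype.card G < 2 * #A) {t : G}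
    (ht : t ≠ 0) : ∃ x ∈ A, ∃ y ∈ A, x ≠ y ∧ x + y = t := by
  obtain ⟨x, hx, y, hy, hxy⟩ := exists_mem_mem_add_eq_of_card_lt (A := A) (B := A) (by omega) t
  refine ⟨x, hx, y, hy, ?_, hxy⟩
  rintro rfl
  exact ht (hxy ▸ h2G x)

theorem Finset.exists_subset_card_eq_sum_eq {G : Type*} [AddCommGroup G] [Fintype G]
    (h2G : ∀ g : G, g + g = 0) {h : ℕ} (h3 : 3 ≤ h) {A : Finset G}
    (hA : Fintype.card G / 2 + h - 1 ≤ #A) (g : G) :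
    ∃ B ⊆ A, #B = h ∧ ∑ x ∈ B, x = g := by
  classical
  obtain ⟨S, hSA, hS, hSg⟩ := A.exists_subset_card_eq_sum_ne (k := h - 2) (by omega) (by omega) g
  have hrest : Fintype.card G < 2 * #(A \ S) := by
    rw [card_sdiff_of_subset hSA]
    omega
  obtain ⟨x, hx, y, hy, hxy, hsum⟩ :=
    exists_ne_add_eq_of_card_lt_two_mul h2G hrest (sub_ne_zero.mpr hSg.symm)
  obtain ⟨hxA, hxS⟩ := mem_sdiff.mp hx
  obtain ⟨hyA, hyS⟩ := mem_sdiff.mp hy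
  have hx' : x ∉ insert y S := by simp [hxy, hxS]
  refine ⟨insert x (insert y S), insert_subset hxA (insert_subset hyA hSA), ?_, ?_⟩
  · rw [card_insert_of_notMem hx', card_insert_of_notMem hyS, hS]
    omega
  · rw [sum_insert hx', sum_insert hyS, ← add_assoc, hsum, sub_add_cancel]

theorem stmt13_general (G : Type*) [AddCommGroup G] [Fintype G] (h : ℕ)
    (h2g : ∀ g : G, g + g = 0)
    (h4 : 4 ≤ h) :
    (∀ A : Finset G, Fintype.card G / 2 + h - 1 ≤ A.card →
      ∀ g : G, ∃ B ⊆ A, B.card = h ∧ B.sum id = g) ∧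
    (∀ m ∈ {m : ℕ | ∃ A : Finset G, A.card = m ∧
        ∃ g : G, ¬ ∃ B ⊆ A, B.card = h ∧ B.sum id = g},
      m ≤ Fintype.card G / 2 + h - 2) := by
  have hsum : ∀ A : Finset G, Fintype.card G / 2 + h - 1 ≤ A.card →
      ∀ g : G, ∃ B ⊆ A, B.card = h ∧ B.sum id = g :=
    fun A hA g ↦ exists_subset_card_eq_sum_eq h2g (by omega) hA g
  refine ⟨hsum, ?_⟩
  rintro m ⟨A, rfl, g, hg⟩
  by_contra hm
  exact hg (hsum A (by omega) g)

theorem stmt13 (G : Type*) [AddCommGroup G] [Fintype G] (r h : ℕ)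
    (h2g : ∀ g : G, g + g = 0) (hn : Fintype.card G = 2 ^ r)
    (h4 : 4 ≤ h) (hh : h ≤ Fintype.card G / 2 - 2) :
    (∀ A : Finset G, Fintype.card G / 2 + h - 1 ≤ A.card →
      ∀ g : G, ∃ B ⊆ A, B.card = h ∧ B.sum id = g) ∧
    (∀ m ∈ {m : ℕ | ∃ A : Finset G, A.card = m ∧
        ∃ g : G, ¬ ∃ B ⊆ A, B.card = h ∧ B.sum id = g},
      m ≤ Fintype.card G / 2 + h - 2) :=
  stmt13_general G h h2g h4
end

section
/- Let G be the elementary abelian 2-group of order n = 2^r with r ≥ 2, and let m be a positive integer. Then G \ {0} contains a subset of size m whose elements sum to 0 if and only if 3 ≤ m ≤ n-4 or m = n-1. -/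
/-!
In an elementary abelian 2-group a zero-sum set of nonzero elements cannot have one or two
elements, and the sum of all elements vanishes once `4 ∣ n`: pairing `x` with `x + t` for a
fixed `t ≠ 0` gives `(n / 2) • t`. Hence taking complements in `G \ {0}` turns zero-sum sets of
size `m` into zero-sum sets of size `n - 1 - m`; this gives necessity and reduces sufficiency to
`3 ≤ m` with `2m < n`. Those sizes are reached from `{a, b, a + b}` by repeatedly replacing an
element `a` of a zero-sum set `A` by the two elements `b` and `a + b`, where `b` avoids the at
most `2 |A| + 2` values for which `b` or `a + b` lies in `A ∪ {0}`.
-/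

open Finset

section

variable {G : Type*} [AddCommGroup G]

theorem add_eq_zero_iff_eq_of_add_self (h2 : ∀ g : G, g + g = 0) {a b : G} :
    a + b = 0 ↔ a = b := by
  rw [add_eq_zero_iff_eq_neg, neg_eq_of_add_eq_zero_right (h2 b)]

theorem exists_notMem_and_add_notMem [Fintype G] [DecidableEq G] (a : G) {X : Finset G}
    (hX : 2 * X.card < Fintype.card G) : ∃ b, b ∉ X ∧ a + b ∉ X := by
  have hbad : (X ∪ X.image (fun x : G => -a + x)).card < (univ : Finset G).card := by
    have := card_image_le (s := X) (f := fun x : G => -a + x)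
    exact (card_union_le _ _).trans_lt (by rw [card_univ]; omega)
  obtain ⟨b, -, hb⟩ := exists_mem_notMem_of_card_lt_card hbad
  refine ⟨b, fun h => hb (mem_union_left _ h), fun h => hb (mem_union_right _ ?_)⟩
  exact mem_image.mpr ⟨a + b, h, neg_add_cancel_left a b⟩

theorem sum_eq_card_div_two_nsmul_of_add_mem [DecidableEq G] (h2 : ∀ g : G, g + g = 0)
    {t : G} (ht : t ≠ 0) (s : Finset G) (hs : ∀ x ∈ s, x + t ∈ s) :
    ∑ x ∈ s, x = (s.card / 2) • t := by
  induction s using Finset.strongInduction with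
  | H s ih =>
    rcases s.eq_empty_or_nonempty with rfl | ⟨x, hx⟩
    · simp
    have hxt : x + t ≠ x := fun h => ht (by simpa using h)
    set s' := (s.erase x).erase (x + t)
    have hxt' : x + t ∈ s.erase x := mem_erase.mpr ⟨hxt, hs x hx⟩
    have hs' : ∀ y ∈ s', y + t ∈ s' := by
      intro y hy
      simp only [s', mem_erase] at hy ⊢
      refine ⟨fun h => hy.2.1 (by simpa using h), fun h => hy.1 ?_, hs y hy.2.2⟩
      rw [← h, add_assoc, h2, add_zero]
    have hcard : s'.card + 2 = s.card := by
      rw [← card_erase_add_one hx, ← card_erase_add_one hxt']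
    have hsub : s' ⊂ s := (erase_ssubset hxt').trans (erase_ssubset hx)
    calc ∑ y ∈ s, y = x + ((x + t) + ∑ y ∈ s', y) := by
          rw [← add_sum_erase s _ hx, ← add_sum_erase (s.erase x) _ hxt']
      _ = t + (s'.card / 2) • t := by
          rw [ih s' hsub hs', ← add_assoc, ← add_assoc, h2, zero_add]
      _ = (s.card / 2) • t := by rw [← hcard, Nat.add_div_right _ two_pos, succ_nsmul']

theorem sum_univ_eq_zero_of_four_dvd_card [Fintype G] (h2 : ∀ g : G, g + g = 0)
    (hcard : 4 ∣ Fintype.card G) : ∑ x : G, x = 0 := by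
  classical
  obtain ⟨k, hk⟩ := hcard
  have : Nontrivial G := Fintype.one_lt_card_iff_nontrivial.mp (by
    have := Fintype.card_pos (α := G)
    omega)
  obtain ⟨t, ht⟩ := exists_ne (0 : G)
  rw [sum_eq_card_div_two_nsmul_of_add_mem h2 ht univ (fun _ _ => mem_univ _), card_univ, hk,
    show 4 * k / 2 = k * 2 by omega, mul_nsmul, two_nsmul, h2]

variable (G) in
def HasZeroSumSubset (m : ℕ) : Prop :=
  ∃ A : Finset G, (0 : G) ∉ A ∧ A.card = m ∧ ∑ x ∈ A, x = 0

namespace HasZeroSumSubset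

variable {m : ℕ}

theorem three_le (h2 : ∀ g : G, g + g = 0) (h : HasZeroSumSubset G m) (hm : m ≠ 0) :
    3 ≤ m := by
  classical
  obtain ⟨A, h0, rfl, hs⟩ := h
  have := Nat.pos_of_ne_zero hm
  by_contra! hlt
  interval_cases hA : A.card
  · obtain ⟨a, rfl⟩ := card_eq_one.mp hA
    rw [sum_singleton] at hs
    exact h0 (hs ▸ mem_singleton_self a)
  · obtain ⟨a, b, hab, rfl⟩ := card_eq_two.mp hA
    rw [sum_pair hab, add_eq_zero_iff_eq_of_add_self h2] at hs
    exact hab hs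

theorem lt_card [Fintype G] (h : HasZeroSumSubset G m) : m < Fintype.card G := by
  obtain ⟨A, h0, rfl, -⟩ := h
  exact card_lt_univ_of_notMem h0

theorem card_sub_one_sub [Fintype G] (htot : ∑ x : G, x = 0) (h : HasZeroSumSubset G m) :
    HasZeroSumSubset G (Fintype.card G - 1 - m) := by
  classical
  obtain ⟨A, h0, rfl, hs⟩ := h
  refine ⟨Aᶜ.erase 0, notMem_erase 0 _, ?_, ?_⟩
  · rw [card_erase_of_mem (mem_compl.mpr h0), card_compl]
    omega
  · have := sum_compl_add_sum A (fun x => x)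
    rw [hs, add_zero, htot] at this
    rwa [sum_erase (f := fun x : G => x) _ rfl]

theorem succ [Fintype G] (h2 : ∀ g : G, g + g = 0) (h : HasZeroSumSubset G m) (hm : m ≠ 0)
    (hroom : 2 * m + 3 ≤ Fintype.card G) : HasZeroSumSubset G (m + 1) := by
  classical
  obtain ⟨A, h0, rfl, hs⟩ := h
  obtain ⟨a, ha⟩ := card_pos.mp (Nat.pos_of_ne_zero hm)
  obtain ⟨b, hbX, habX⟩ := exists_notMem_and_add_notMem a (X := insert 0 A)
    (by rw [card_insert_of_notMem h0]; omega)
  simp only [mem_insert, not_or] at hbX habX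
  have hbab : b ≠ a + b := fun h => ne_of_mem_of_not_mem ha h0 (right_eq_add.mp h)
  have hab : a + b ∉ A.erase a := fun h => habX.2 (mem_of_mem_erase h)
  have hb : b ∉ insert (a + b) (A.erase a) := by
    simp only [mem_insert, not_or]
    exact ⟨hbab, fun h => hbX.2 (mem_of_mem_erase h)⟩
  refine ⟨insert b (insert (a + b) (A.erase a)), ?_, ?_, ?_⟩
  · simp only [mem_insert, not_or]
    exact ⟨Ne.symm hbX.1, Ne.symm habX.1, fun h => h0 (mem_of_mem_erase h)⟩
  · rw [card_insert_of_notMem hb, card_insert_of_notMem hab, card_erase_of_mem ha]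
    omega
  · rw [sum_insert hb, sum_insert hab, sum_erase_eq_sub ha, hs, zero_sub,
      show b + (a + b + -a) = b + b by abel, h2]

end HasZeroSumSubset

theorem hasZeroSumSubset_three [Fintype G] (h2 : ∀ g : G, g + g = 0)
    (hG : 4 ≤ Fintype.card G) : HasZeroSumSubset G 3 := by
  classical
  have : Nontrivial G := Fintype.one_lt_card_iff_nontrivial.mp (by omega)
  obtain ⟨a, ha⟩ := exists_ne (0 : G)
  obtain ⟨b, hb, hab⟩ := exists_notMem_and_add_notMem a (X := {0}) (by simp; omega)
  rw [mem_singleton] at hb hab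
  have hba : a ≠ b := fun h => hab ((add_eq_zero_iff_eq_of_add_self h2).mpr h)
  have haab : a ≠ a + b := fun h => hb (left_eq_add.mp h)
  have hbab : b ≠ a + b := fun h => ha (right_eq_add.mp h)
  refine ⟨{a, b, a + b}, ?_, card_eq_three.mpr ⟨a, b, a + b, hba, haab, hbab, rfl⟩, ?_⟩
  · simp only [mem_insert, mem_singleton, not_or]
    exact ⟨Ne.symm ha, Ne.symm hb, Ne.symm hab⟩
  · have ha' : a ∉ ({b, a + b} : Finset G) := by
      simp only [mem_insert, mem_singleton, not_or]
      exact ⟨hba, haab⟩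
    rw [sum_insert ha', sum_pair hbab, ← add_assoc, h2]

theorem HasZeroSumSubset.of_two_mul_lt [Fintype G] (h2 : ∀ g : G, g + g = 0) {m : ℕ}
    (h3 : 3 ≤ m) (hm : 2 * m < Fintype.card G) : HasZeroSumSubset G m := by
  induction m, h3 using Nat.le_induction with
  | base => exact hasZeroSumSubset_three h2 (by omega)
  | succ m h3 ih => exact (ih (by omega)).succ h2 (by omega) (by omega)

end

theorem stmt15 (G : Type*) [AddCommGroup G] [Fintype G] (r : ℕ) (hr : 2 ≤ r)
    (h2g : ∀ g : G, g + g = 0) (hn : Fintype.card G = 2 ^ r)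
    (m : ℕ) (hm : 1 ≤ m) :
    (∃ A : Finset G, (0 : G) ∉ A ∧ A.card = m ∧ A.sum id = 0) ↔
    ((3 ≤ m ∧ m ≤ Fintype.card G - 4) ∨ m = Fintype.card G - 1) := by
  have hdvd : 4 ∣ Fintype.card G := hn ▸ pow_dvd_pow 2 hr
  have htot := sum_univ_eq_zero_of_four_dvd_card h2g hdvd
  change HasZeroSumSubset G m ↔ _
  constructor
  · intro h
    have h3 := h.three_le h2g (by omega)
    have hlt := h.lt_card
    have hcompl := (h.card_sub_one_sub htot).three_le h2g
    omega
  · rintro (⟨h3, hle⟩ | rfl)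
    · rcases lt_or_ge (2 * m) (Fintype.card G) with hsmall | hlarge
      · exact .of_two_mul_lt h2g h3 hsmall
      · have hcompl := (HasZeroSumSubset.of_two_mul_lt h2g (m := Fintype.card G - 1 - m)
          (by omega) (by omega)).card_sub_one_sub htot
        rwa [show Fintype.card G - 1 - (Fintype.card G - 1 - m) = m by omega] at hcompl
    · simpa using HasZeroSumSubset.card_sub_one_sub htot ⟨∅, notMem_empty 0, rfl, rfl⟩
end

section
/- Let G be a finite abelian group of order n with subgroup of involutions of order l, and let m be a positive integer with m ≤ n. Then G contains an m-element subset summing to 0, except exactly in the cases: (G is an elementary abelian 2-group and m ∈ {2, n-2}), or (l = 2 and m = n). -/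
open Finset

/-- feasibility of subset sums in an elementary abelian 2-group -/
def GoodE (E : Type*) [AddCommGroup E] [Fintype E] : Prop :=
  ∀ t : E, ∀ b : ℕ, b ≤ Fintype.card E →
    ((t = 0 ∧ b ≠ 2 ∧ b + 2 ≠ Fintype.card E) ∨ (t ≠ 0 ∧ 1 ≤ b ∧ b + 1 ≤ Fintype.card E)) →
    ∃ B : Finset E, B.card = b ∧ B.sum id = t

lemma goodE_of_addEquiv {E F : Type*} [AddCommGroup E] [Fintype E] [AddCommGroup F] [Fintype F]
    (e : E ≃+ F) (hE : GoodE E) : GoodE F := by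
  intro t b hb hcond
  have hcard : Fintype.card E = Fintype.card F := Fintype.card_congr e.toEquiv
  have h0 : e.symm t = 0 ↔ t = 0 := by
    constructor
    · intro h; have := congrArg e h; simpa using this
    · rintro rfl; simp
  obtain ⟨B, hB1, hB2⟩ := hE (e.symm t) b (by omega)
    (by rcases hcond with ⟨h1, h2⟩ | ⟨h1, h2⟩
        · exact Or.inl ⟨h0.mpr h1, by omega, by omega⟩
        · exact Or.inr ⟨fun hh => h1 (h0.mp hh), by omega⟩)
  refine ⟨B.map e.toEquiv.toEmbedding, by simp [hB1], ?_⟩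
  rw [Finset.sum_map]
  have hB2' : ∑ x ∈ B, x = e.symm t := hB2
  calc ∑ x ∈ B, id (e.toEquiv.toEmbedding x) = e (∑ x ∈ B, x) := by
        rw [map_sum]; rfl
    _ = t := by rw [hB2']; simp

lemma card_pow2 {E : Type*} [AddCommGroup E] [Fintype E] (he : ∀ g : E, g + g = 0) :
    ∃ k, Fintype.card E = 2 ^ k := by
  letI : Module (ZMod 2) E := AddCommGroup.zmodModule (by intro x; rw [two_nsmul]; exact he x)
  exact ⟨_, by rw [Module.card_eq_pow_finrank (K := ZMod 2) (V := E), ZMod.card]⟩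

lemma neg_eq_self_of {E : Type*} [AddCommGroup E] (he : ∀ g : E, g + g = 0) (x : E) : -x = x :=
  neg_eq_of_add_eq_zero_left (he x)

lemma goodE_card_four {E : Type*} [AddCommGroup E] [Fintype E] [DecidableEq E]
    (he : ∀ g : E, g + g = 0) (h4 : Fintype.card E = 4) : GoodE E := by
  have hnt : Nontrivial E := Fintype.one_lt_card_iff_nontrivial.mp (by omega)
  obtain ⟨x, hx⟩ := exists_ne (0 : E)
  obtain ⟨y, hy⟩ : ∃ y, y ∉ ({0, x} : Finset E) := by
    by_contra hall
    push_neg at hall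
    have hsub : (Finset.univ : Finset E) ⊆ {0, x} := fun z _ => hall z
    have h1 := Finset.card_le_card hsub
    have h2 : ({0, x} : Finset E).card ≤ 2 := (Finset.card_insert_le _ _).trans (by simp)
    rw [Finset.card_univ, h4] at h1
    omega
  simp only [Finset.mem_insert, Finset.mem_singleton, not_or] at hy
  have hy0 : y ≠ 0 := hy.1
  have hyx : y ≠ x := hy.2
  have hxy0 : x + y ≠ 0 := fun h => hyx (add_left_cancel (h.trans (he x).symm))
  have hxyx : x + y ≠ x := fun h => hy0 (add_left_cancel (h.trans (add_zero x).symm))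
  have hxyy : x + y ≠ y := fun h => hx (add_right_cancel (h.trans (zero_add y).symm))
  have hm1 : (0:E) ∉ ({x, y, x + y} : Finset E) := by
    simp [Ne.symm hx, Ne.symm hy0, Ne.symm hxy0]
  have hm2 : x ∉ ({y, x + y} : Finset E) := by simp [Ne.symm hyx, Ne.symm hxyx]
  have hm3 : y ∉ ({x + y} : Finset E) := by simp [Ne.symm hxyy]
  have hset : ({0, x, y, x + y} : Finset E) = Finset.univ := by
    apply Finset.eq_univ_of_card
    rw [h4, Finset.card_insert_of_notMem hm1, Finset.card_insert_of_notMem hm2,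
        Finset.card_insert_of_notMem hm3, Finset.card_singleton]
  have hsum3 : ({x, y, x + y} : Finset E).sum id = 0 := by
    rw [Finset.sum_insert hm2, Finset.sum_insert hm3, Finset.sum_singleton]
    simp only [id]
    rw [← add_assoc]
    exact he _
  have hsumuniv : (Finset.univ : Finset E).sum id = 0 := by
    rw [← hset, Finset.sum_insert hm1, hsum3, add_zero]
    rfl
  intro t b hb hcond
  rw [h4] at hb
  rcases hcond with ⟨rfl, hb2, hbn⟩ | ⟨ht, hb1, hbn⟩
  · rw [h4] at hbn
    interval_cases b
    · exact ⟨∅, by simp⟩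
    · exact ⟨{0}, by simp⟩
    · omega
    · refine ⟨{x, y, x + y}, ?_, hsum3⟩
      rw [Finset.card_insert_of_notMem hm2, Finset.card_insert_of_notMem hm3,
          Finset.card_singleton]
    · exact ⟨Finset.univ, by rw [Finset.card_univ, h4], hsumuniv⟩
  · rw [h4] at hbn
    interval_cases b
    · exact ⟨{t}, by simp⟩
    · exact ⟨{0, t}, by rw [Finset.card_insert_of_notMem (by simp [Ne.symm ht]), Finset.card_singleton],
        by rw [Finset.sum_insert (by simp [Ne.symm ht]), Finset.sum_singleton]; simp⟩
    · refine ⟨Finset.univ.erase t, ?_, ?_⟩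
      · rw [Finset.card_erase_of_mem (Finset.mem_univ t), Finset.card_univ, h4]
      · have h1 := Finset.add_sum_erase Finset.univ id (Finset.mem_univ t)
        have h2 : id t + (Finset.univ.erase t).sum id = 0 := by rw [h1, hsumuniv]
        have h3 : (Finset.univ.erase t).sum id = -t := eq_neg_of_add_eq_zero_right h2
        rw [h3, neg_eq_self_of he]
    · omega

lemma combineE {E : Type*} [AddCommGroup E] [Fintype E] [DecidableEq E]
    (S0 S1 : Finset E) :
    ∃ B : Finset (E × ZMod 2), B.card = S0.card + S1.card ∧
      B.sum id = (S0.sum id + S1.sum id, (S1.card : ZMod 2)) := by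
  have hinj0 : Function.Injective (fun g : E => (g, (0 : ZMod 2))) := fun a b h => by
    simpa using congrArg Prod.fst h
  have hinj1 : Function.Injective (fun g : E => (g, (1 : ZMod 2))) := fun a b h => by
    simpa using congrArg Prod.fst h
  set B0 := S0.map ⟨_, hinj0⟩ with hB0
  set B1 := S1.map ⟨_, hinj1⟩ with hB1
  have hdisj : Disjoint B0 B1 := by
    rw [Finset.disjoint_left]
    intro a ha0 ha1
    simp only [hB0, hB1, Finset.mem_map, Function.Embedding.coeFn_mk] at ha0 ha1
    obtain ⟨c, -, rfl⟩ := ha0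
    obtain ⟨d, -, hd⟩ := ha1
    have := congrArg Prod.snd hd
    simp at this
  refine ⟨B0 ∪ B1, ?_, ?_⟩
  · rw [Finset.card_union_of_disjoint hdisj, Finset.card_map, Finset.card_map]
  · rw [Finset.sum_union hdisj, Finset.sum_map, Finset.sum_map]
    have e0 : ∑ x ∈ S0, id ((⟨_, hinj0⟩ : E ↪ E × ZMod 2) x) = (S0.sum id, (0 : ZMod 2)) := by
      simp only [Function.Embedding.coeFn_mk, id]
      rw [Prod.ext_iff]
      constructor
      · rw [Prod.fst_sum]
      · rw [Prod.snd_sum]; simp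
    have e1 : ∑ x ∈ S1, id ((⟨_, hinj1⟩ : E ↪ E × ZMod 2) x) = (S1.sum id, (S1.card : ZMod 2)) := by
      simp only [Function.Embedding.coeFn_mk, id]
      rw [Prod.ext_iff]
      constructor
      · rw [Prod.fst_sum]
      · rw [Prod.snd_sum]
        simp [Finset.sum_const, nsmul_eq_mul]
    rw [e0, e1, Prod.mk_add_mk, zero_add]

lemma goodE_step {E : Type*} [AddCommGroup E] [Fintype E] [DecidableEq E]
    (he : ∀ g : E, g + g = 0) (h4 : 4 ≤ Fintype.card E) (heven : 2 ∣ Fintype.card E)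
    (h6 : Fintype.card E ≠ 6) (hE : GoodE E) : GoodE (E × ZMod 2) := by
  set N := Fintype.card E with hN
  have hcard : Fintype.card (E × ZMod 2) = 2 * N := by
    rw [Fintype.card_prod, ZMod.card]; ring
  have hnt : Nontrivial E := Fintype.one_lt_card_iff_nontrivial.mp (by omega)
  have havoid : ∀ w : E, ∃ v : E, v ≠ 0 ∧ v ≠ w := by
    intro w
    by_contra hall
    push_neg at hall
    have hsub : (Finset.univ : Finset E) ⊆ {0, w} := by
      intro z _
      rcases eq_or_ne z 0 with rfl | hz
      · simp
      · simp [hall z hz]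
    have h1 := Finset.card_le_card hsub
    have h2 : ({0, w} : Finset E).card ≤ 2 := (Finset.card_insert_le _ _).trans (by simp)
    rw [Finset.card_univ] at h1
    omega
  have hcast0 : ∀ c : ℕ, 2 ∣ c → ((c : ZMod 2) = 0) := fun c hc =>
    (ZMod.natCast_eq_zero_iff c 2).mpr hc
  have hcast1 : ∀ c : ℕ, ¬ 2 ∣ c → ((c : ZMod 2) = 1) := by
    intro c hc
    have h1 : c % 2 = 1 := by omega
    rw [← ZMod.natCast_mod, h1, Nat.cast_one]
  have hsv : ∀ v w : E, (w + v) + v = w := by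
    intro v w
    rw [add_assoc, he v, add_zero]
  have hne : ∀ v w : E, v ≠ w → w + v ≠ 0 := by
    intro v w hvw h
    exact hvw (by rw [← neg_eq_self_of he w, ← (neg_eq_of_add_eq_zero_right h)])
  have build : ∀ (b0 b1 : ℕ) (s0 s1 : E),
      b0 ≤ N → b1 ≤ N →
      ((s0 = 0 ∧ b0 ≠ 2 ∧ b0 + 2 ≠ N) ∨ (s0 ≠ 0 ∧ 1 ≤ b0 ∧ b0 + 1 ≤ N)) →
      ((s1 = 0 ∧ b1 ≠ 2 ∧ b1 + 2 ≠ N) ∨ (s1 ≠ 0 ∧ 1 ≤ b1 ∧ b1 + 1 ≤ N)) →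
      ∃ B : Finset (E × ZMod 2), B.card = b0 + b1 ∧ B.sum id = (s0 + s1, (b1 : ZMod 2)) := by
    intro b0 b1 s0 s1 h0 h1 hf0 hf1
    obtain ⟨S0, hS0c, hS0s⟩ := hE s0 b0 h0 hf0
    obtain ⟨S1, hS1c, hS1s⟩ := hE s1 b1 h1 hf1
    obtain ⟨B, hBc, hBs⟩ := combineE S0 S1
    exact ⟨B, by rw [hBc, hS0c, hS1c], by rw [hBs, hS0s, hS1s, hS1c]⟩
  rintro ⟨t1, t0⟩ b hb hcond
  rw [hcard] at hb
  have h01 : t0 = 0 ∨ t0 = 1 := by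
    have : ∀ z : ZMod 2, z = 0 ∨ z = 1 := by decide
    exact this t0
  rcases hcond with ⟨hz, hb2, hbn⟩ | ⟨ht, hb1, hbn⟩
  · rw [Prod.mk_eq_zero] at hz
    obtain ⟨rfl, rfl⟩ := hz
    rw [hcard] at hbn
    by_cases hA : b ≤ N
    · by_cases hA2 : b + 2 = N
      · -- b = N - 2, N ≥ 8
        have hN8 : 8 ≤ N := by
          rcases heven with ⟨c, hc⟩
          omega
        obtain ⟨u, hu⟩ := exists_ne (0 : E)
        obtain ⟨B, hc, hs⟩ := build (N - 6) 4 u u (by omega) (by omega)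
          (Or.inr ⟨hu, by omega, by omega⟩) (Or.inr ⟨hu, by omega, by omega⟩)
        refine ⟨B, by omega, ?_⟩
        rw [hs, he u, hcast0 4 (by omega)]
      · obtain ⟨B, hc, hs⟩ := build b 0 0 0 hA (by omega)
          (Or.inl ⟨rfl, hb2, hA2⟩) (Or.inl ⟨rfl, by omega, by omega⟩)
        refine ⟨B, by omega, ?_⟩
        rw [hs, add_zero, Nat.cast_zero]
    · by_cases hA4 : b = N + 2
      · have hN8 : 8 ≤ N := by
          rcases heven with ⟨c, hc⟩
          omega
        obtain ⟨u, hu⟩ := exists_ne (0 : E)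
        obtain ⟨B, hc, hs⟩ := build 4 (N - 2) u u (by omega) (by omega)
          (Or.inr ⟨hu, by omega, by omega⟩) (Or.inr ⟨hu, by omega, by omega⟩)
        refine ⟨B, by omega, ?_⟩
        rw [hs, he u, hcast0 (N - 2) (by omega)]
      · obtain ⟨B, hc, hs⟩ := build (b - N) N 0 0 (by omega) le_rfl
          (Or.inl ⟨rfl, by omega, by omega⟩) (Or.inl ⟨rfl, by omega, by omega⟩)
        refine ⟨B, by omega, ?_⟩
        rw [hs, add_zero, hcast0 N heven]
  · rw [hcard] at hbn
    rcases h01 with rfl | rfl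
    · -- t0 = 0, so t1 ≠ 0
      have ht1 : t1 ≠ 0 := fun h => ht (by rw [h]; rfl)
      by_cases hB1 : b + 1 ≤ N
      · obtain ⟨B, hc, hs⟩ := build b 0 t1 0 (by omega) (by omega)
          (Or.inr ⟨ht1, hb1, hB1⟩) (Or.inl ⟨rfl, by omega, by omega⟩)
        refine ⟨B, by omega, ?_⟩
        rw [hs, add_zero, Nat.cast_zero]
      · by_cases hB2 : b ≤ N + 1
        · obtain ⟨v, hv0, hvt⟩ := havoid t1
          obtain ⟨B, hc, hs⟩ := build (b - 2) 2 (t1 + v) v (by omega) (by omega)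
            (Or.inr ⟨hne v t1 hvt, by omega, by omega⟩) (Or.inr ⟨hv0, by omega, by omega⟩)
          refine ⟨B, by omega, ?_⟩
          rw [hs, hsv v t1, hcast0 2 (by omega)]
        · obtain ⟨B, hc, hs⟩ := build (b - N) N t1 0 (by omega) le_rfl
            (Or.inr ⟨ht1, by omega, by omega⟩) (Or.inl ⟨rfl, by omega, by omega⟩)
          refine ⟨B, by omega, ?_⟩
          rw [hs, add_zero, hcast0 N heven]
    · -- t0 = 1
      by_cases hB4 : b = 1
      · obtain ⟨B, hc, hs⟩ := build 0 1 0 t1 (by omega) (by omega)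
          (Or.inl ⟨rfl, by omega, by omega⟩)
          (by rcases eq_or_ne t1 0 with rfl | ht1
              · exact Or.inl ⟨rfl, by omega, by omega⟩
              · exact Or.inr ⟨ht1, by omega, by omega⟩)
        refine ⟨B, by omega, ?_⟩
        rw [hs, zero_add, Nat.cast_one]
      · by_cases hB5 : b ≤ N
        · obtain ⟨v, hvt⟩ := exists_ne t1
          obtain ⟨B, hc, hs⟩ := build (b - 1) 1 (t1 + v) v (by omega) (by omega)
            (Or.inr ⟨hne v t1 hvt, by omega, by omega⟩)
            (by rcases eq_or_ne v 0 with rfl | hv0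
                · exact Or.inl ⟨rfl, by omega, by omega⟩
                · exact Or.inr ⟨hv0, by omega, by omega⟩)
          refine ⟨B, by omega, ?_⟩
          rw [hs, hsv v t1, Nat.cast_one]
        · by_cases hB7 : b + 1 = 2 * N
          · obtain ⟨B, hc, hs⟩ := build N (N - 1) 0 t1 le_rfl (by omega)
              (Or.inl ⟨rfl, by omega, by omega⟩)
              (by rcases eq_or_ne t1 0 with rfl | ht1
                  · exact Or.inl ⟨rfl, by omega, by omega⟩
                  · exact Or.inr ⟨ht1, by omega, by omega⟩)
            refine ⟨B, by omega, ?_⟩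
            rw [hs, zero_add, hcast1 (N - 1) (by omega)]
          · obtain ⟨v, hv0, hvt⟩ := havoid t1
            obtain ⟨B, hc, hs⟩ := build (b - (N - 1)) (N - 1) (t1 + v) v (by omega) (by omega)
              (Or.inr ⟨hne v t1 hvt, by omega, by omega⟩)
              (Or.inr ⟨hv0, by omega, by omega⟩)
            refine ⟨B, by omega, ?_⟩
            rw [hs, hsv v t1, hcast1 (N - 1) (by omega)]

def prodAddEquivFin (k : ℕ) : ((Fin k → ZMod 2) × ZMod 2) ≃+ (Fin (k + 1) → ZMod 2) where
  toFun p := Fin.cons p.2 p.1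
  invFun f := (fun i => f i.succ, f 0)
  left_inv p := by ext <;> simp
  right_inv f := by
    funext i
    refine Fin.cases ?_ (fun j => ?_) i <;> simp
  map_add' p q := by
    funext i
    refine Fin.cases ?_ (fun j => ?_) i <;> simp

lemma zmod2_self_add : ∀ z : ZMod 2, z + z = 0 := by decide

lemma goodE_pow : ∀ k, 2 ≤ k → GoodE (Fin k → ZMod 2) := by
  intro k
  induction k with
  | zero => omega
  | succ n ih =>
    intro hk
    have hepi : ∀ g : Fin (n + 1) → ZMod 2, g + g = 0 := by
      intro g; funext i; exact zmod2_self_add (g i)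
    rcases Nat.lt_or_ge n 2 with h | h
    · have hn : n = 1 := by omega
      subst hn
      apply goodE_card_four hepi
      rw [Fintype.card_fun, ZMod.card, Fintype.card_fin]
      norm_num
    · have hcard : Fintype.card (Fin n → ZMod 2) = 2 ^ n := by
        rw [Fintype.card_fun, ZMod.card, Fintype.card_fin]
      have h4d : 4 ∣ 2 ^ n := by
        have := pow_dvd_pow 2 h
        simpa using this
      apply goodE_of_addEquiv (prodAddEquivFin n)
      have hpos : 0 < 2 ^ n := pow_pos (by norm_num) n
      apply goodE_step (fun g => by funext i; exact zmod2_self_add (g i))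
        (by rw [hcard]; omega) (by rw [hcard]; omega) (by rw [hcard]; omega) (ih h)

lemma goodE_of_elem {E : Type*} [AddCommGroup E] [Fintype E] [DecidableEq E]
    (he : ∀ g : E, g + g = 0) (h4 : 4 ≤ Fintype.card E) : GoodE E := by
  letI : Module (ZMod 2) E := AddCommGroup.zmodModule (by intro x; rw [two_nsmul]; exact he x)
  haveI : Module.Finite (ZMod 2) E := Module.Finite.of_finite
  have e := (Module.finBasis (ZMod 2) E).equivFun
  have hc : Fintype.card E = 2 ^ Module.finrank (ZMod 2) E := by
    rw [Module.card_eq_pow_finrank (K := ZMod 2), ZMod.card]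
  have hk : 2 ≤ Module.finrank (ZMod 2) E := by
    by_contra hcon
    push_neg at hcon
    have h2 : 2 ^ Module.finrank (ZMod 2) E ≤ 2 ^ 1 :=
      Nat.pow_le_pow_right (by norm_num) (by omega)
    omega
  exact goodE_of_addEquiv e.symm.toAddEquiv (goodE_pow _ hk)

lemma pair_removal {G : Type*} [AddCommGroup G] [DecidableEq G] {D : Finset G}
    (hD : ∀ g ∈ D, -g ∈ D ∧ -g ≠ g) {g : G} (hg : g ∈ D) :
    ({g, -g} : Finset G) ⊆ D ∧ ({g, -g} : Finset G).card = 2 ∧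
    (D \ {g, -g}).card + 2 = D.card ∧
    (∀ h ∈ D \ {g, -g}, -h ∈ D \ {g, -g} ∧ -h ≠ h) := by
  obtain ⟨hg1, hg2⟩ := hD g hg
  have hpair : ({g, -g} : Finset G) ⊆ D := by
    intro z hz
    simp only [Finset.mem_insert, Finset.mem_singleton] at hz
    rcases hz with rfl | rfl
    · exact hg
    · exact hg1
  have hpaircard : ({g, -g} : Finset G).card = 2 := by
    rw [Finset.card_insert_of_notMem (by simp [Ne.symm hg2]), Finset.card_singleton]
  refine ⟨hpair, hpaircard, ?_, ?_⟩
  · rw [Finset.card_sdiff_of_subset hpair, hpaircard]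
    have := Finset.card_le_card hpair
    omega
  · intro h hh
    rw [Finset.mem_sdiff] at hh
    obtain ⟨hh1, hh2⟩ := hh
    simp only [Finset.mem_insert, Finset.mem_singleton, not_or] at hh2
    obtain ⟨hhg, hhng⟩ := hh2
    refine ⟨?_, (hD h hh1).2⟩
    rw [Finset.mem_sdiff]
    refine ⟨(hD h hh1).1, ?_⟩
    simp only [Finset.mem_insert, Finset.mem_singleton, not_or]
    constructor
    · intro hcon
      apply hhng
      rw [← hcon, neg_neg]
    · intro hcon
      apply hhg
      have := congrArg Neg.neg hcon
      simpa using this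

lemma pairs_lemma {G : Type*} [AddCommGroup G] [DecidableEq G] :
    ∀ (c : ℕ) (D : Finset G), (∀ g ∈ D, -g ∈ D ∧ -g ≠ g) → 2 * c ≤ D.card →
    ∃ A : Finset G, A ⊆ D ∧ A.card = 2 * c ∧ A.sum id = 0 := by
  intro c
  induction c with
  | zero => exact fun D _ _ => ⟨∅, by simp⟩
  | succ n ih =>
    intro D hD hc
    have hne : D.Nonempty := Finset.card_pos.mp (by omega)
    obtain ⟨g, hg⟩ := hne
    obtain ⟨hpair, hpaircard, hcard', hsub⟩ := pair_removal hD hg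
    obtain ⟨A, hA1, hA2, hA3⟩ := ih (D \ {g, -g}) hsub (by omega)
    have hgA : g ∉ A := fun h => by
      have := hA1 h
      rw [Finset.mem_sdiff] at this
      simp at this
    have hngA : -g ∉ A := fun h => by
      have := hA1 h
      rw [Finset.mem_sdiff] at this
      simp at this
    have hg2 := (hD g hg).2
    have hgi : g ∉ insert (-g) A := by simp [Ne.symm hg2, hgA]
    refine ⟨insert g (insert (-g) A), ?_, ?_, ?_⟩
    · intro z hz
      simp only [Finset.mem_insert] at hz
      rcases hz with rfl | rfl | hz
      · exact hg
      · exact (hD g hg).1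
      · exact (Finset.mem_sdiff.mp (hA1 hz)).1
    · rw [Finset.card_insert_of_notMem hgi, Finset.card_insert_of_notMem hngA, hA2]
      ring
    · rw [Finset.sum_insert hgi, Finset.sum_insert hngA, hA3]
      simp

lemma negclosed_even_card {G : Type*} [AddCommGroup G] [DecidableEq G] :
    ∀ (n : ℕ) (D : Finset G), D.card ≤ n → (∀ g ∈ D, -g ∈ D ∧ -g ≠ g) → 2 ∣ D.card := by
  intro n
  induction n with
  | zero =>
    intro D h _
    have : D.card = 0 := by omega
    omega
  | succ n ih =>
    intro D hDn hD
    rcases Finset.eq_empty_or_nonempty D with rfl | ⟨g, hg⟩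
    · simp
    · obtain ⟨hpair, hpaircard, hcard', hsub⟩ := pair_removal hD hg
      have := ih (D \ {g, -g}) (by omega) hsub
      omega

def invSubgroup (G : Type*) [AddCommGroup G] : AddSubgroup G where
  carrier := {g | g + g = 0}
  zero_mem' := by simp
  add_mem' := by
    intro a b ha hb
    simp only [Set.mem_setOf_eq] at *
    have h : a + b + (a + b) = a + a + (b + b) := by abel
    rw [h, ha, hb, add_zero]
  neg_mem' := by
    intro a ha
    simp only [Set.mem_setOf_eq] at *
    have h : -a + -a = -(a + a) := by abel
    rw [h, ha, neg_zero]

lemma mem_invSubgroup {G : Type*} [AddCommGroup G] (g : G) :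
    g ∈ invSubgroup G ↔ g + g = 0 := Iff.rfl

lemma no_zero_sum_two {G : Type*} [AddCommGroup G] (he : ∀ g : G, g + g = 0)
    {A : Finset G} (h2 : A.card = 2) : A.sum id ≠ 0 := by
  classical
  obtain ⟨a, b, hab, rfl⟩ := Finset.card_eq_two.mp h2
  rw [Finset.sum_pair hab]
  intro h
  apply hab
  have h' : a + b = a + a := h.trans (he a).symm
  exact (add_left_cancel h').symm

lemma sum_univ_eq_zero {G : Type*} [AddCommGroup G] [Fintype G] (he : ∀ g : G, g + g = 0)
    (h4 : 4 ≤ Fintype.card G) : (Finset.univ : Finset G).sum id = 0 := by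
  classical
  obtain ⟨B, hB1, hB2⟩ := goodE_of_elem he h4 0 (Fintype.card G) le_rfl
    (Or.inl ⟨rfl, by omega, by omega⟩)
  have : B = Finset.univ := (Finset.card_eq_iff_eq_univ B).mp hB1
  rwa [this] at hB2

lemma pow2_tri {n k : ℕ} (h : n = 2 ^ k) : n = 1 ∨ n = 2 ∨ 4 ∣ n := by
  match k with
  | 0 => omega
  | 1 => omega
  | (j + 2) =>
    right; right
    exact ⟨2 ^ j, by rw [h]; ring⟩

theorem stmt17 (G : Type*) [AddCommGroup G] [Fintype G]
    (m : ℕ) (hm1 : 1 ≤ m) (hm2 : m ≤ Fintype.card G) :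
    (∃ A : Finset G, A.card = m ∧ A.sum id = 0) ↔
    ¬ (((∀ g : G, g + g = 0) ∧ (m = 2 ∨ m = Fintype.card G - 2)) ∨
       (Nat.card {g : G // g + g = 0} = 2 ∧ m = Fintype.card G)) := by
  classical
  set n := Fintype.card G with hn
  set Hf := Finset.univ.filter (fun g : G => g + g = 0) with hHf
  set Df := Finset.univ.filter (fun g : G => ¬ (g + g = 0)) with hDf
  have hlP : Hf.card + Df.card = n := Finset.card_filter_add_card_filter_not _
  have hl_eq : Nat.card {g : G // g + g = 0} = Hf.card := by
    rw [Nat.card_eq_fintype_card, Fintype.card_subtype]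
  have h0H : (0 : G) ∈ Hf := by simp [hHf]
  have hl1 : 1 ≤ Hf.card := Finset.card_pos.mpr ⟨0, h0H⟩
  have hDneg : ∀ g ∈ Df, -g ∈ Df ∧ -g ≠ g := by
    intro g hg
    simp only [hDf, Finset.mem_filter, Finset.mem_univ, true_and] at hg ⊢
    constructor
    · intro hcon
      apply hg
      have h : g + g = -(-g + -g) := by abel
      rw [h, hcon, neg_zero]
    · intro hcon
      apply hg
      have h : g + -g = 0 := add_neg_cancel g
      rwa [hcon] at h
  have heH : ∀ h : ↥(invSubgroup G), h + h = 0 := by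
    intro h
    exact Subtype.ext h.2
  have hcardH : Fintype.card ↥(invSubgroup G) = Hf.card := by
    rw [← Nat.card_eq_fintype_card, ← hl_eq]
    exact Nat.card_congr (Equiv.subtypeEquivRight (fun g => Iff.rfl))
  have Bex : ∀ b : ℕ, (b = 0 ∨ b = 1 ∨ (4 ≤ Hf.card ∧ b ≤ Hf.card ∧ b ≠ 2 ∧ b + 2 ≠ Hf.card)) →
      ∃ B : Finset G, (∀ g ∈ B, g + g = 0) ∧ B.card = b ∧ B.sum id = 0 := by
    intro b hb
    rcases hb with rfl | rfl | ⟨h4, hble, hb2, hbn⟩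
    · exact ⟨∅, by simp, by simp, by simp⟩
    · exact ⟨{0}, by simp, by simp, by simp⟩
    · obtain ⟨B', hB1, hB2⟩ := goodE_of_elem heH (by rw [hcardH]; exact h4) 0 b
        (by rw [hcardH]; exact hble) (Or.inl ⟨rfl, hb2, by rw [hcardH]; exact hbn⟩)
      refine ⟨B'.map ⟨Subtype.val, Subtype.val_injective⟩, ?_, ?_, ?_⟩
      · intro g hg
        simp only [Finset.mem_map, Function.Embedding.coeFn_mk] at hg
        obtain ⟨x, -, rfl⟩ := hg
        exact x.2
      · rw [Finset.card_map, hB1]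
      · rw [Finset.sum_map]
        calc ∑ x ∈ B', id ((⟨Subtype.val, Subtype.val_injective⟩ :
                ↥(invSubgroup G) ↪ G) x)
            = (invSubgroup G).subtype (∑ x ∈ B', x) := by rw [map_sum]; rfl
          _ = 0 := by rw [show (∑ x ∈ B', x) = 0 from hB2]; simp
  have combine : ∀ a b : ℕ, 2 ∣ a → a ≤ Df.card → a + b = m →
      (b = 0 ∨ b = 1 ∨ (4 ≤ Hf.card ∧ b ≤ Hf.card ∧ b ≠ 2 ∧ b + 2 ≠ Hf.card)) →
      ∃ A : Finset G, A.card = m ∧ A.sum id = 0 := by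
    rintro a b ⟨c, hc⟩ ha hab hbex
    obtain ⟨A, hA1, hA2, hA3⟩ := pairs_lemma c Df hDneg (by omega)
    obtain ⟨B, hB0, hB1, hB2⟩ := Bex b hbex
    have hdisj : Disjoint A B := by
      rw [Finset.disjoint_left]
      intro x hxA hxB
      have h1 := hA1 hxA
      simp only [hDf, Finset.mem_filter, Finset.mem_univ, true_and] at h1
      exact h1 (hB0 x hxB)
    refine ⟨A ∪ B, ?_, ?_⟩
    · rw [Finset.card_union_of_disjoint hdisj, hA2, hB1]
      omega
    · rw [Finset.sum_union hdisj, hA3, hB2, add_zero]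
  constructor
  · rintro ⟨A, hA1, hA2⟩ hexc
    rcases hexc with ⟨he, hm⟩ | ⟨hl, hmn⟩
    · rcases hm with rfl | hm
      · exact no_zero_sum_two he hA1 hA2
      · have h3 : 3 ≤ n := by omega
        obtain ⟨k, hk⟩ := card_pow2 he
        have h4 : 4 ≤ n := by rcases pow2_tri hk with h | h | h <;> omega
        have hsumu := sum_univ_eq_zero he h4
        have hsubA : A ⊆ Finset.univ := Finset.subset_univ A
        have hcardC : (Finset.univ \ A).card = 2 := by
          rw [Finset.card_sdiff_of_subset hsubA, Finset.card_univ]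
          omega
        have hsumC : (Finset.univ \ A).sum id = 0 := by
          have h := Finset.sum_sdiff hsubA (f := id)
          rw [hsumu, hA2, add_zero] at h
          exact h
        exact no_zero_sum_two he hcardC hsumC
    · have hA : A = Finset.univ := (Finset.card_eq_iff_eq_univ A).mp (by rw [hA1, hmn])
      have hDsum : Df.sum id = 0 := by
        apply Finset.sum_involution (fun a _ => -a)
        · intro a ha
          simp
        · intro a ha _
          exact ((hDneg a ha).2)
        · intro a ha
          simp
        · intro a ha
          exact ((hDneg a ha).1)
      have hHcard : Hf.card = 2 := by rw [← hl_eq]; exact hl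
      obtain ⟨x, y, hxy, hxyeq⟩ := Finset.card_eq_two.mp hHcard
      have hsumH : Hf.sum id ≠ 0 := by
        rw [hxyeq, Finset.sum_pair hxy]
        rw [hxyeq] at h0H
        simp only [Finset.mem_insert, Finset.mem_singleton] at h0H
        rcases h0H with rfl | rfl
        · simp only [id]
          rw [zero_add]
          exact fun h => hxy h.symm
        · simp only [id]
          rw [add_zero]
          exact hxy
      have huniv : (Finset.univ : Finset G).sum id =
          Hf.sum id + Df.sum id := (Finset.sum_filter_add_sum_filter_not _ _ _).symm
      rw [hA] at hA2
      rw [hA2, hDsum, add_zero] at huniv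
      exact hsumH huniv.symm
  · intro hexc
    obtain ⟨hex1, hex2⟩ := not_or.mp hexc
    by_cases he : ∀ g : G, g + g = 0
    · have hm2' : m ≠ 2 := fun h => hex1 ⟨he, Or.inl h⟩
      have hmn2 : m ≠ n - 2 := fun h => hex1 ⟨he, Or.inr h⟩
      rcases Nat.lt_or_ge n 3 with hsmall | h3
      · have hm1' : m = 1 := by omega
        subst hm1'
        exact ⟨{0}, by simp, by simp⟩
      · obtain ⟨k, hk⟩ := card_pow2 he
        have h4 : 4 ≤ n := by rcases pow2_tri hk with h | h | h <;> omega
        obtain ⟨B, h1, h2⟩ := goodE_of_elem he h4 0 m hm2 (Or.inl ⟨rfl, hm2', by omega⟩)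
        exact ⟨B, h1, h2⟩
    · push_neg at he
      obtain ⟨g0, hg0⟩ := he
      have hg0D : g0 ∈ Df := by simp [hDf, hg0]
      have hP2 : 2 ≤ Df.card := by
        obtain ⟨hpair, hpc, hpc2, -⟩ := pair_removal hDneg hg0D
        omega
      have hPeven : 2 ∣ Df.card := negclosed_even_card Df.card Df le_rfl hDneg
      have hlpow : ∃ k, Hf.card = 2 ^ k := by
        obtain ⟨k, hk⟩ := card_pow2 heH
        exact ⟨k, by rw [← hcardH]; exact hk⟩
      have hex2' : ¬(Hf.card = 2 ∧ m = n) := by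
        rintro ⟨h1, h2⟩
        exact hex2 ⟨by rw [hl_eq]; exact h1, h2⟩
      obtain ⟨k, hk⟩ := hlpow
      by_cases hme : 2 ∣ m
      · by_cases hmP : m ≤ Df.card
        · exact combine m 0 hme hmP (by omega) (Or.inl rfl)
        · rcases pow2_tri hk with h | h | h
          · omega
          · exact absurd ⟨h, by omega⟩ hex2'
          · have hl4 : 4 ≤ Hf.card := by omega
            by_cases hc2 : m - Df.card = 2
            · exact combine (Df.card - 2) 4 (by omega) (by omega) (by omega)
                (Or.inr (Or.inr ⟨hl4, by omega, by omega, by omega⟩))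
            · by_cases hcl : m - Df.card + 2 = Hf.card
              · exact combine (Df.card - 2) Hf.card (by omega) (by omega) (by omega)
                  (Or.inr (Or.inr ⟨hl4, le_rfl, by omega, by omega⟩))
              · exact combine Df.card (m - Df.card) hPeven le_rfl (by omega)
                  (Or.inr (Or.inr ⟨hl4, by omega, by omega, by omega⟩))
      · by_cases hmP : m - 1 ≤ Df.card
        · exact combine (m - 1) 1 (by omega) hmP (by omega) (Or.inr (Or.inl rfl))
        · rcases pow2_tri hk with h | h | h
          · omega
          · omega
          · exact combine Df.card (m - Df.card) hPeven le_rfl (by omega)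
              (Or.inr (Or.inr ⟨by omega, by omega, by omega, by omega⟩))
end
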